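/- For every partition μ = (μ₁, …, μ_m) of length m, 𝔊_μ(u) = ∏_{i=1}^{m} (1 − u/(v t^{i−1})) · (t^{i}/(u x))^{μᵢ} as elements of ℚ(t, u, v, x). Equivalently, 𝔊 satisfies the recursion 𝔊_{(μ₁,…,μ_m)}(u) = (1 − u/v) · (t/(ux))^{μ₁} · 𝔊_{(μ₂,…,μ_m)}(u/t), with 𝔊 of the empty partition equal to 1. -/

import Mathlib

open Finset

noncomputable section

/-- The field `ℚ(t, u, v, x)` of rational functions in four variables over `ℚ`. -/
abbrev K4 : Type := FractionRing (MvPolynomial (Fin 4) ℚ)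

/-- The variable `t` of `ℚ(t, u, v, x)`. -/
def tv : K4 := algebraMap (MvPolynomial (Fin 4) ℚ) K4 (MvPolynomial.X 0)

/-- The variable `u` of `ℚ(t, u, v, x)`. -/
def uv : K4 := algebraMap (MvPolynomial (Fin 4) ℚ) K4 (MvPolynomial.X 1)

/-- The variable `v` of `ℚ(t, u, v, x)`. -/
def vv : K4 := algebraMap (MvPolynomial (Fin 4) ℚ) K4 (MvPolynomial.X 2)

/-- The variable `x` of `ℚ(t, u, v, x)`. -/
def xv : K4 := algebraMap (MvPolynomial (Fin 4) ℚ) K4 (MvPolynomial.X 3)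

/-- The coefficient of `zᵢ^k` in `(1 − (t/(vx)) zᵢ)(Σ_{k≥0} (t/(uE·x))^k zᵢ^k)`:
`1` for `k = 0`, and `(t/(uE·x))^k − (t/(vx))(t/(uE·x))^{k−1}` for `k ≥ 1`. -/
def gcoef (uE : K4) (k : ℕ) : K4 :=
  if k = 0 then 1
  else (tv / (uE * xv)) ^ k - tv / (vv * xv) * (tv / (uE * xv)) ^ (k - 1)

/-- `𝔊_μ(uE) ∈ ℚ(t, u, v, x)` (for a parameter `uE` substituted for `u`): the coefficient of
`z₁^{μ₁} ⋯ z_m^{μ_m}` in the formal product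
`∏_{1≤i<j≤m} (1 − z_j/zᵢ)(Σ_{k≥0} t^k (z_j/zᵢ)^k)
  · ∏_{i=1}^{m} (1 − (t/(vx)) zᵢ)(Σ_{k≥0} (t/(uE·x))^k zᵢ^k)`.
It is computed by expanding the product: `km.1 i` is the exponent of `zᵢ` chosen from the
`i`-th factor, with coefficient `gcoef uE`, and for a pair `p = (i,j)` with `i < j`,
`km.2 p` is the exponent of the ratio `z_j/zᵢ`, with coefficient `1` for exponent `0` and
`t^k − t^{k−1}` for exponent `k ≥ 1`.  The condition matches the exponent of each `zᵢ`
with `μᵢ`.  Only finitely many terms contribute, so the `finsum` is the honest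
coefficient. -/
def Gvx (uE : K4) (mu : List ℕ) : K4 :=
  ∑ᶠ km : (Fin mu.length → ℕ) × (Fin mu.length × Fin mu.length → ℕ),
    if (∀ p : Fin mu.length × Fin mu.length, ¬ p.1 < p.2 → km.2 p = 0) ∧
        (∀ a : Fin mu.length,
          (km.1 a : ℤ) + (∑ c, if c < a then (km.2 (c, a) : ℤ) else 0)
            - (∑ b, if a < b then (km.2 (a, b) : ℤ) else 0) = (mu.get a : ℤ))
      then (∏ i : Fin mu.length, gcoef uE (km.1 i)) *
        ∏ p : Fin mu.length × Fin mu.length,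
          (if p.1 < p.2 then
            (if km.2 p = 0 then 1 else tv ^ (km.2 p) - tv ^ (km.2 p - 1)) else 1)
      else 0

/-! Peel off `z₁`. A monomial of the expanded product is determined by the exponents `bⱼ` of
`z_{j+1}/z₁` together with a monomial for `(μ₂, …, μ_m)`; matching exponents forces `z₁` to take
`μ₁ + Σ bⱼ > 0` from its own factor, which contributes `(1 − u/v)(t/(ux))^{μ₁ + Σ bⱼ}`. Summing
over `bⱼ` then turns each remaining one-variable coefficient at `u` into the one at `u/t`, by
`Σ_{b ≤ n} g_u(n − b) (t/(ux))^b r(b) = g_{u/t}(n)`, where `r` is the coefficient of the pair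
factor. This is the recursion, and iterating it gives the product. -/

theorem List.get_cons_eq_finCons {α : Type*} (a : α) (l : List α) :
    (a :: l).get = (Fin.cons a l.get : Fin (l.length + 1) → α) := by
  funext i
  cases i using Fin.cases <;> rfl

namespace Gvx

abbrev Exponents (m : ℕ) : Type := (Fin m → ℕ) × (Fin m × Fin m → ℕ)

def Admissible {m : ℕ} (μ : Fin m → ℕ) (e : Exponents m) : Prop :=
  (∀ p : Fin m × Fin m, ¬ p.1 < p.2 → e.2 p = 0) ∧
    ∀ a, e.1 a + ∑ c, e.2 (c, a) = μ a + ∑ b, e.2 (a, b)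

def pairCoef (k : ℕ) : K4 := if k = 0 then 1 else tv ^ k - tv ^ (k - 1)

def pairWeight {m : ℕ} (k : Fin m × Fin m → ℕ) : K4 :=
  ∏ p : Fin m × Fin m, if p.1 < p.2 then pairCoef (k p) else 1

def weight (uE : K4) {m : ℕ} (e : Exponents m) : K4 :=
  (∏ i, gcoef uE (e.1 i)) * pairWeight e.2

def Gvec (uE : K4) {m : ℕ} (μ : Fin m → ℕ) : K4 :=
  ∑ᶠ e ∈ {e | Admissible μ e}, weight uE e

theorem balance_iff {m : ℕ} {k : Fin m × Fin m → ℕ}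
    (hk : ∀ p : Fin m × Fin m, ¬ p.1 < p.2 → k p = 0) (n μ : ℕ) (a : Fin m) :
    (n : ℤ) + (∑ c, if c < a then (k (c, a) : ℤ) else 0)
        - (∑ b, if a < b then (k (a, b) : ℤ) else 0) = μ ↔
      n + ∑ c, k (c, a) = μ + ∑ b, k (a, b) := by
  have hupper (i j : Fin m) : (if i < j then (k (i, j) : ℤ) else 0) = k (i, j) := by
    split_ifs with h
    · rfl
    · simp [hk (i, j) h]
  simp only [hupper]
  rw [← Nat.cast_inj (R := ℤ)]
  push_cast
  omega

theorem Gvx_eq_Gvec (uE : K4) (mu : List ℕ) : Gvx uE mu = Gvec uE mu.get := by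
  classical
  rw [Gvec, finsum_mem_def]
  refine finsum_congr fun e => ?_
  rw [Set.indicator_apply]
  refine if_congr ?_ rfl rfl
  exact and_congr_right fun hk => forall_congr' fun a => balance_iff hk _ _ a

theorem Gvec_zero (uE : K4) (μ : Fin 0 → ℕ) : Gvec uE μ = 1 := by
  have hall : {e | Admissible μ e} = Set.univ :=
    Set.eq_univ_of_forall fun _ => ⟨fun p => p.1.elim0, fun a => a.elim0⟩
  rw [Gvec, hall, finsum_mem_univ, finsum_eq_single _ (0, 0)
    fun e he => absurd (Prod.ext (funext (·.elim0)) (funext (·.1.elim0))) he]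
  simp [weight, pairWeight]

/-- With variables indexed by `Fin (m + 1)`, `e.1 j` is the exponent of `z_{j.succ}` from its own
factor plus that of `(z_{j.succ}/z_0)^{b j}`. -/
def glue (a : ℕ) {m : ℕ} (e : Exponents m) (b : Fin m → ℕ) : Exponents (m + 1) :=
  (Fin.cons (a + ∑ j, b j) fun j => e.1 j - b j,
    fun p => (Fin.cons (Fin.cons 0 b) fun i => Fin.cons 0 fun j => e.2 (i, j) :
      Fin (m + 1) → Fin (m + 1) → ℕ) p.1 p.2)

def split {m : ℕ} (e : Exponents (m + 1)) : Exponents m × (Fin m → ℕ) :=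
  ((fun j => e.1 j.succ + e.2 (0, j.succ), fun p => e.2 (p.1.succ, p.2.succ)),
    fun j => e.2 (0, j.succ))

theorem split_glue (a : ℕ) {m : ℕ} {e : Exponents m} {b : Fin m → ℕ} (hb : b ≤ e.1) :
    split (glue a e b) = (e, b) := by
  refine Prod.ext (Prod.ext (funext fun j => ?_) rfl) rfl
  simp [split, glue, Nat.sub_add_cancel (hb j)]

theorem admissible_glue_iff (a : ℕ) {m : ℕ} (μ : Fin m → ℕ) {e : Exponents m}
    {b : Fin m → ℕ} (hb : b ≤ e.1) :
    Admissible (Fin.cons a μ) (glue a e b) ↔ Admissible μ e := by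
  simp only [Admissible, glue, Prod.forall, Fin.forall_fin_succ, Fin.sum_univ_succ]
  simp only [lt_self_iff_false, not_false_eq_true, Fin.cons_zero, imp_self, Fin.succ_pos,
    not_true_eq_false, Fin.cons_succ, IsEmpty.forall_iff, implies_true, and_self, not_lt_zero,
    Fin.succ_lt_succ_iff, not_lt, true_and, sum_const_zero, add_zero, zero_add,
    and_congr_right_iff]
  refine fun _ => forall_congr' fun i => ?_
  rw [← add_assoc, Nat.sub_add_cancel (hb i)]

theorem glue_split {a : ℕ} {m : ℕ} {μ : Fin m → ℕ} {e : Exponents (m + 1)}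
    (he : Admissible (Fin.cons a μ) e) : glue a (split e).1 (split e).2 = e := by
  obtain ⟨hupper, hbalance⟩ := he
  have h0 := hbalance 0
  simp only [Fin.sum_univ_succ, hupper (0, 0) (lt_irrefl 0),
    hupper (_, 0) (Fin.not_lt_zero _)] at h0
  refine Prod.ext (funext fun i => ?_) (funext fun ⟨i, j⟩ => ?_)
  · cases i using Fin.cases <;> simp [glue, split] at h0 ⊢
    omega
  · cases i using Fin.cases <;> cases j using Fin.cases <;> simp [glue, split, hupper]

def glueDomain {m : ℕ} (μ : Fin m → ℕ) : Set (Exponents m × (Fin m → ℕ)) :=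
  {q | Admissible μ q.1 ∧ q.2 ≤ q.1.1}

theorem bijOn_glue (a : ℕ) {m : ℕ} (μ : Fin m → ℕ) :
    Set.BijOn (fun q => glue a q.1 q.2) (glueDomain μ) {e | Admissible (Fin.cons a μ) e} := by
  refine ⟨fun q hq => (admissible_glue_iff a μ hq.2).2 hq.1, ?_, fun e he => ?_⟩
  · exact Set.LeftInvOn.injOn (f₁' := split) fun q hq => split_glue a hq.2
  · have hle : (split e).2 ≤ (split e).1.1 := fun j => Nat.le_add_left _ _
    have he' : Admissible (Fin.cons a μ) (glue a (split e).1 (split e).2) := by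
      rwa [glue_split he]
    exact ⟨split e, ⟨(admissible_glue_iff a μ hle).1 he', hle⟩, glue_split he⟩

theorem finite_glueDomain {m : ℕ} {μ : Fin m → ℕ} (hμ : {e | Admissible μ e}.Finite) :
    (glueDomain μ).Finite := by
  refine (hμ.biUnion fun e _ => (Set.finite_singleton e).prod (Set.finite_Iic e.1)).subset ?_
  rintro ⟨e, b⟩ ⟨he, hb⟩
  exact Set.mem_biUnion he ⟨rfl, hb⟩

theorem finite_admissible : ∀ {m : ℕ} (μ : Fin m → ℕ), {e | Admissible μ e}.Finite
  | 0, _ => Set.toFinite _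
  | _ + 1, μ => by
    rw [← Fin.cons_self_tail μ, ← (bijOn_glue (μ 0) (Fin.tail μ)).image_eq]
    exact (finite_glueDomain (finite_admissible (Fin.tail μ))).image _

theorem algebraMap_X_ne_zero (i : Fin 4) :
    algebraMap (MvPolynomial (Fin 4) ℚ) K4 (MvPolynomial.X i) ≠ 0 :=
  (map_ne_zero_iff _ (IsFractionRing.injective _ _)).2 (MvPolynomial.X_ne_zero i)

theorem tv_ne_zero : tv ≠ 0 := algebraMap_X_ne_zero 0

theorem uv_ne_zero : uv ≠ 0 := algebraMap_X_ne_zero 1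

theorem div_vv_mul_tv_div {uE : K4} (hE : uE ≠ 0) :
    uE / vv * (tv / (uE * xv)) = tv / (vv * xv) := by
  field_simp

theorem gcoef_of_ne_zero {uE : K4} (hE : uE ≠ 0) {k : ℕ} (hk : k ≠ 0) :
    gcoef uE k = (1 - uE / vv) * (tv / (uE * xv)) ^ k := by
  obtain ⟨j, rfl⟩ := Nat.exists_eq_succ_of_ne_zero hk
  rw [gcoef, if_neg hk, Nat.succ_sub_one, ← div_vv_mul_tv_div hE, pow_succ]
  ring

theorem sum_range_pairCoef (n : ℕ) : ∑ b ∈ range (n + 1), pairCoef b = tv ^ n := by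
  induction n with
  | zero => simp [pairCoef]
  | succ n ih =>
    rw [sum_range_succ, ih, pairCoef, if_neg n.succ_ne_zero, Nat.succ_sub_one]
    ring

theorem sum_Iic_gcoef_mul_pairCoef {uE : K4} (hE : uE ≠ 0) (n : ℕ) :
    ∑ b ∈ Iic n, gcoef uE (n - b) * (tv / (uE * xv)) ^ b * pairCoef b = gcoef (uE / tv) n := by
  rw [← Nat.range_succ_eq_Iic]
  rcases n with _ | n
  · simp [gcoef, pairCoef]
  have hlow : ∀ b ∈ range (n + 1), gcoef uE (n + 1 - b) * (tv / (uE * xv)) ^ b * pairCoef b =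
      (1 - uE / vv) * (tv / (uE * xv)) ^ (n + 1) * pairCoef b := by
    intro b hb
    have hb : b < n + 1 := mem_range.1 hb
    rw [gcoef_of_ne_zero hE (by omega), mul_assoc (1 - uE / vv), ← pow_add,
      Nat.sub_add_cancel hb.le]
  rw [sum_range_succ, sum_congr rfl hlow, ← mul_sum, sum_range_pairCoef,
    Nat.sub_self, gcoef, if_pos rfl, gcoef, if_neg n.succ_ne_zero, pairCoef, if_neg n.succ_ne_zero,
    Nat.add_sub_cancel]
  have hshift : tv / (uE / tv * xv) = tv * (tv / (uE * xv)) := by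
    field_simp [tv_ne_zero]
  rw [hshift, ← div_vv_mul_tv_div hE]
  ring

theorem pairWeight_glue (a : ℕ) {m : ℕ} (e : Exponents m) (b : Fin m → ℕ) :
    pairWeight (glue a e b).2 = (∏ j, pairCoef (b j)) * pairWeight e.2 := by
  simp [pairWeight, glue, Fintype.prod_prod_type, Fin.prod_univ_succ, pairCoef]

theorem weight_glue {uE : K4} (hE : uE ≠ 0) {a : ℕ} (ha : 0 < a) {m : ℕ} (e : Exponents m)
    (b : Fin m → ℕ) :
    weight uE (glue a e b) = (1 - uE / vv) * (tv / (uE * xv)) ^ a *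
      ((∏ j, gcoef uE (e.1 j - b j) * (tv / (uE * xv)) ^ b j * pairCoef (b j)) *
        pairWeight e.2) := by
  rw [weight, pairWeight_glue, Fin.prod_univ_succ]
  simp only [glue, Fin.cons_zero, Fin.cons_succ]
  rw [gcoef_of_ne_zero hE (by omega), pow_add, ← prod_pow_eq_pow_sum, prod_mul_distrib,
    prod_mul_distrib]
  ring

theorem sum_Iic_weight_glue {uE : K4} (hE : uE ≠ 0) {a : ℕ} (ha : 0 < a) {m : ℕ}
    (e : Exponents m) :
    ∑ b ∈ Iic e.1, weight uE (glue a e b) =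
      (1 - uE / vv) * (tv / (uE * xv)) ^ a * weight (uE / tv) e := by
  simp_rw [weight_glue hE ha, ← mul_sum, ← sum_mul]
  rw [show Iic e.1 = Fintype.piFinset fun j => Iic (e.1 j) from rfl,
    ← prod_univ_sum (fun j => Iic (e.1 j))
      fun j b => gcoef uE (e.1 j - b) * (tv / (uE * xv)) ^ b * pairCoef b]
  simp_rw [sum_Iic_gcoef_mul_pairCoef hE]
  rfl

theorem Gvec_cons {uE : K4} (hE : uE ≠ 0) {a : ℕ} (ha : 0 < a) {m : ℕ} (μ : Fin m → ℕ) :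
    Gvec uE (Fin.cons a μ : Fin (m + 1) → ℕ) =
      (1 - uE / vv) * (tv / (uE * xv)) ^ a * Gvec (uE / tv) μ := by
  have hμ := finite_admissible μ
  rw [Gvec, ← finsum_mem_eq_of_bijOn (f := fun q => weight uE (glue a q.1 q.2)) _
      (bijOn_glue a μ) fun _ _ => rfl,
    finsum_mem_eq_finite_toFinset_sum _ (finite_glueDomain hμ),
    sum_finset_product _ hμ.toFinset (fun e => Iic e.1) (by simp [glueDomain]),
    Gvec, finsum_mem_eq_finite_toFinset_sum _ hμ, mul_sum]
  exact sum_congr rfl fun e _ => sum_Iic_weight_glue hE ha e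

theorem Gvec_eq_prod {m : ℕ} (μ : Fin m → ℕ) (hμ : ∀ i, 0 < μ i) {uE : K4} (hE : uE ≠ 0) :
    Gvec uE μ =
      ∏ i : Fin m, (1 - uE / (vv * tv ^ (i : ℕ))) * (tv ^ ((i : ℕ) + 1) / (uE * xv)) ^ μ i := by
  induction m generalizing uE with
  | zero => rw [Gvec_zero, Fin.prod_univ_zero]
  | succ m ih =>
    have hfactor (i : Fin m) :
        (1 - uE / tv / (vv * tv ^ (i : ℕ))) * (tv ^ ((i : ℕ) + 1) / (uE / tv * xv)) ^ μ i.succ =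
          (1 - uE / (vv * tv ^ ((i : ℕ) + 1))) * (tv ^ ((i : ℕ) + 2) / (uE * xv)) ^ μ i.succ := by
      field_simp [tv_ne_zero]
      ring
    rw [← Fin.cons_self_tail μ, Gvec_cons hE (hμ 0),
      ih (Fin.tail μ) (fun i => hμ i.succ) (div_ne_zero hE tv_ne_zero),
      Fin.prod_univ_succ]
    simp [Fin.tail, hfactor]

end Gvx

theorem Gvx_eq_general (mu : List ℕ) (h2 : ∀ x ∈ mu, 0 < x) :
    (Gvx uv mu =
      ∏ i : Fin mu.length,
        (1 - uv / (vv * tv ^ (i : ℕ))) * (tv ^ ((i : ℕ) + 1) / (uv * xv)) ^ (mu.get i)) ∧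
    (mu ≠ [] →
      Gvx uv mu = (1 - uv / vv) * (tv / (uv * xv)) ^ mu.headI * Gvx (uv / tv) mu.tail) ∧
    (∀ uE : K4, Gvx uE [] = 1) := by
  refine ⟨?_, fun hne => ?_, fun uE => ?_⟩
  · rw [Gvx.Gvx_eq_Gvec]
    exact Gvx.Gvec_eq_prod _ (fun i => h2 _ (List.get_mem _ _)) Gvx.uv_ne_zero
  · obtain ⟨a, l, rfl⟩ := List.exists_cons_of_ne_nil hne
    rw [Gvx.Gvx_eq_Gvec, Gvx.Gvx_eq_Gvec, List.get_cons_eq_finCons,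
      Gvx.Gvec_cons Gvx.uv_ne_zero (h2 a List.mem_cons_self)]
    rfl
  · rw [Gvx.Gvx_eq_Gvec]
    exact Gvx.Gvec_zero _ _

/-- For every partition `μ = (μ₁, …, μ_m)` of length `m`:
`𝔊_μ(u) = ∏_{i=1}^{m} (1 − u/(v t^{i−1})) (t^{i}/(ux))^{μᵢ}` in `ℚ(t, u, v, x)`;
equivalently, `𝔊` satisfies the recursion
`𝔊_{(μ₁,…,μ_m)}(u) = (1 − u/v)(t/(ux))^{μ₁} 𝔊_{(μ₂,…,μ_m)}(u/t)`, with `𝔊` of the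
empty partition equal to `1`. -/
theorem Gvx_eq (mu : List ℕ) (h1 : mu.Pairwise (· ≥ ·)) (h2 : ∀ x ∈ mu, 0 < x) :
    (Gvx uv mu =
      ∏ i : Fin mu.length,
        (1 - uv / (vv * tv ^ (i : ℕ))) * (tv ^ ((i : ℕ) + 1) / (uv * xv)) ^ (mu.get i)) ∧
    (mu ≠ [] →
      Gvx uv mu = (1 - uv / vv) * (tv / (uv * xv)) ^ mu.headI * Gvx (uv / tv) mu.tail) ∧
    (∀ uE : K4, Gvx uE [] = 1) :=
  Gvx_eq_general mu h2

end
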